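/- Let q be a power of an odd prime p with q ≡ 1 (mod 3) and F = 𝔽_q, and let φ be an automorphism of the graph R. If φ([0,0,r]) = [0,0,r] for some r ∈ F, then φ([0,0,r−k]) = [0,0,r−k] for every element k of the prime subfield 𝔽_p of F (i.e., for every k that is an integer multiple of 1 in F). -/

import Mathlib

/-- Vertices: points (left component) and lines (right component), each a triple over `F`. -/
abbrev Vtx (F : Type) := (F × F × F) ⊕ (F × F × F)

/-- Adjacency for the graph `Γ_F(p₁ℓ₁, g(p₁,p₂,ℓ₁))`: a point `(p₁,p₂,p₃)` and a line
`[ℓ₁,ℓ₂,ℓ₃]` are adjacent iff `p₂+ℓ₂ = p₁ℓ₁` and `p₃+ℓ₃ = g(p₁,p₂,ℓ₁)`. -/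
def gammaAdj (F : Type) [Field F] (g : F → F → F → F) : Vtx F → Vtx F → Prop
  | Sum.inl p, Sum.inr l => p.2.1 + l.2.1 = p.1 * l.1 ∧ p.2.2 + l.2.2 = g p.1 p.2.1 l.1
  | Sum.inr l, Sum.inl p => p.2.1 + l.2.1 = p.1 * l.1 ∧ p.2.2 + l.2.2 = g p.1 p.2.1 l.1
  | _, _ => False

/-- The bipartite graph `Γ_F(p₁ℓ₁, g(p₁,p₂,ℓ₁))`. -/
def Gamma (F : Type) [Field F] (g : F → F → F → F) : SimpleGraph (Vtx F) where
  Adj := gammaAdj F g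
  symm := by
    constructor
    intro v w h
    match v, w with
    | Sum.inl p, Sum.inr l => exact h
    | Sum.inr l, Sum.inl p => exact h
  loopless := by
    constructor
    intro v h
    match v with
    | Sum.inl p => exact h
    | Sum.inr l => exact h

/-- The graph `R = Γ_F(p₁ℓ₁, p₁p₂ℓ₁(p₁+p₂+p₁p₂))`. -/
def RGraph (F : Type) [Field F] : SimpleGraph (Vtx F) :=
  Gamma F (fun p1 p2 l1 => p1 * p2 * l1 * (p1 + p2 + p1 * p2))

/-!
Call `W` a successor of a vertex `L` if `W` has no common neighbour with `L` and exactly one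
neighbour special for `L`, i.e. a vertex not adjacent to `L` but adjacent to two distinct
vertices sharing a neighbour with `L`. This is defined from adjacency alone, so automorphisms
preserve it. In `R`, when `2 ≠ 0`, the only successor of `[0,0,s]` is `[0,1,s]`, and the only
successor of `[0,1,s]` not joined to `[0,0,s]` by a walk of length four is `[0,0,s-1]`. Hence an
automorphism fixing `[0,0,s]` fixes `[0,1,s]` and then `[0,0,s-1]`, and induction on `n` gives
the claim.
-/

namespace SimpleGraph

variable {V V' : Type*} {G : SimpleGraph V} {G' : SimpleGraph V'}

def IsSpecial (G : SimpleGraph V) (L Q : V) : Prop :=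
  ¬ G.Adj Q L ∧ ∃ M M', M ≠ M' ∧ (G.commonNeighbors L M).Nonempty ∧
    (G.commonNeighbors L M').Nonempty ∧ G.Adj Q M ∧ G.Adj Q M'

def HasWalkOfLengthFour (G : SimpleGraph V) (u v : V) : Prop :=
  ∃ w, (G.commonNeighbors u w).Nonempty ∧ (G.commonNeighbors w v).Nonempty

def IsSuccessor (G : SimpleGraph V) (L W : V) : Prop :=
  ¬ (G.commonNeighbors L W).Nonempty ∧ ∃! Q, G.IsSpecial L Q ∧ G.Adj Q W

namespace Iso

variable (φ : G ≃g G') {L M Q W : V}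

theorem commonNeighbors_nonempty_iff :
    (G'.commonNeighbors (φ L) (φ M)).Nonempty ↔ (G.commonNeighbors L M).Nonempty := by
  simp only [Set.Nonempty, mem_commonNeighbors, φ.surjective.exists, φ.map_adj_iff]

theorem isSpecial_iff : G'.IsSpecial (φ L) (φ Q) ↔ G.IsSpecial L Q := by
  simp only [IsSpecial, φ.surjective.exists, φ.map_adj_iff, ne_eq, φ.apply_eq_iff_eq,
    φ.commonNeighbors_nonempty_iff]

theorem isSuccessor_iff : G'.IsSuccessor (φ L) (φ W) ↔ G.IsSuccessor L W := by
  simp only [IsSuccessor, ExistsUnique, φ.surjective.exists, φ.surjective.forall, φ.map_adj_iff,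
    φ.apply_eq_iff_eq, φ.commonNeighbors_nonempty_iff, φ.isSpecial_iff]

theorem hasWalkOfLengthFour_iff :
    G'.HasWalkOfLengthFour (φ L) (φ W) ↔ G.HasWalkOfLengthFour L W := by
  simp only [HasWalkOfLengthFour, φ.surjective.exists, φ.commonNeighbors_nonempty_iff]

end Iso
end SimpleGraph

namespace RGraph

open SimpleGraph
variable {F : Type} [Field F]

@[simp]
theorem adj_inl_inr {x y z a b c : F} :
    (RGraph F).Adj (.inl (x, y, z)) (.inr (a, b, c)) ↔
      y + b = x * a ∧ z + c = x * y * a * (x + y + x * y) := Iff.rfl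

@[simp]
theorem adj_inr_inl {x y z a b c : F} :
    (RGraph F).Adj (.inr (a, b, c)) (.inl (x, y, z)) ↔
      y + b = x * a ∧ z + c = x * y * a * (x + y + x * y) := Iff.rfl

@[simp]
theorem not_adj_inl_inl (P P' : F × F × F) : ¬ (RGraph F).Adj (.inl P) (.inl P') := id

@[simp]
theorem not_adj_inr_inr (L L' : F × F × F) : ¬ (RGraph F).Adj (.inr L) (.inr L') := id

theorem adj_inr_zero_iff {b s : F} {P : Vtx F} :
    (RGraph F).Adj (.inr (0, b, s)) P ↔ ∃ a, P = .inl (a, -b, -s) := by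
  rcases P with ⟨a, y, z⟩ | P
  · simp only [adj_inr_inl, mul_zero, zero_mul, Sum.inl.injEq, Prod.mk.injEq]
    constructor
    · rintro ⟨h1, h2⟩
      exact ⟨a, rfl, by linear_combination h1, by linear_combination h2⟩
    · rintro ⟨a', -, rfl, rfl⟩
      constructor <;> ring
  · simp

theorem commonNeighbors_inr_zero_nonempty_iff {b s : F} {M : Vtx F} :
    ((RGraph F).commonNeighbors (.inr (0, b, s)) M).Nonempty ↔
      ∃ a, (RGraph F).Adj M (.inl (a, -b, -s)) := by
  simp [Set.Nonempty, mem_commonNeighbors, adj_inr_zero_iff]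

theorem fst_ne_of_adj_of_adj {P M M' : F × F × F} (hM : (RGraph F).Adj (.inl P) (.inr M))
    (hM' : (RGraph F).Adj (.inl P) (.inr M')) (hMM' : M ≠ M') : M.1 ≠ M'.1 := by
  obtain ⟨x, y, z⟩ := P
  obtain ⟨m1, m2, m3⟩ := M
  obtain ⟨m1', m2', m3'⟩ := M'
  simp only [adj_inl_inr] at hM hM'
  rintro (rfl : m1 = m1')
  apply hMM'
  have h2 : m2 = m2' := by linear_combination hM.1 - hM'.1
  have h3 : m3 = m3' := by linear_combination hM.2 - hM'.2
  rw [h2, h3]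

theorem isSpecial_inr_zero_zero_iff (h2 : (2 : F) ≠ 0) {s : F} {Q : Vtx F} :
    (RGraph F).IsSpecial (.inr (0, 0, s)) Q ↔
      ∃ x y, Q = .inl (x, y, -s) ∧ y ≠ 0 ∧ x * (x + y + x * y) = 0 := by
  constructor
  · rintro ⟨hQL, M, M', hMM', hM, hM', hQM, hQM'⟩
    rw [commonNeighbors_inr_zero_nonempty_iff] at hM hM'
    obtain ⟨a, hM⟩ := hM
    obtain ⟨a', hM'⟩ := hM'
    rcases M with M | ⟨m1, m2, m3⟩
    · simp at hM
    rcases M' with M' | ⟨m1', m2', m3'⟩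
    · simp at hM'
    rcases Q with ⟨x, y, z⟩ | Q
    swap
    · simp at hQM
    have hm : m1 ≠ m1' := fst_ne_of_adj_of_adj hQM hQM' fun h => hMM' (congrArg Sum.inr h)
    simp only [adj_inl_inr, adj_inr_inl] at hM hM' hQM hQM'
    -- each line through `Q` sharing a neighbour with `[0,0,s]` has `m₃ = s`, so its slope
    -- satisfies the affine condition `m₁ · xy(x + y + xy) = z + s`; two distinct slopes force
    -- both sides to vanish
    have hK : x * y * (x + y + x * y) = 0 := by
      refine (mul_eq_zero.1 ?_).resolve_left (sub_ne_zero.2 hm)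
      linear_combination hQM'.2 - hQM.2 + hM.2 - hM'.2
    have hz : z = -s := by linear_combination hQM.2 - hM.2 + m1 * hK
    have hy : y ≠ 0 := by
      rintro rfl
      exact hQL (by simp [hz])
    have hyK : y * (x * (x + y + x * y)) = 0 := by linear_combination hK
    exact ⟨x, y, by rw [hz], hy, (mul_eq_zero.1 hyK).resolve_left hy⟩
  · rintro ⟨x, y, rfl, hy, hx⟩
    refine ⟨fun h => hy (by simpa using h.1), .inr (1, x - y, s), .inr (-1, -x - y, s), ?_, ?_, ?_,
      ?_, ?_⟩
    · simp only [ne_eq, Sum.inr.injEq, Prod.mk.injEq, not_and]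
      exact fun h _ _ => h2 (by linear_combination h)
    · exact commonNeighbors_inr_zero_nonempty_iff.2
        ⟨x - y, by simp only [adj_inr_inl]; constructor <;> ring⟩
    · exact commonNeighbors_inr_zero_nonempty_iff.2
        ⟨x + y, by simp only [adj_inr_inl]; constructor <;> ring⟩
    · simp only [adj_inl_inr]
      exact ⟨by ring, by linear_combination (-y) * hx⟩
    · simp only [adj_inl_inr]
      exact ⟨by ring, by linear_combination y * hx⟩

theorem isSpecial_inr_zero_one_iff (h2 : (2 : F) ≠ 0) {s : F} {Q : Vtx F} :
    (RGraph F).IsSpecial (.inr (0, 1, s)) Q ↔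
      ∃ x y, Q = .inl (x, y, y + 1 - s) ∧ y ≠ -1 ∧ (x = 0 ∨ y * (x + y + x * y) = 1) := by
  constructor
  · rintro ⟨hQL, M, M', hMM', hM, hM', hQM, hQM'⟩
    rw [commonNeighbors_inr_zero_nonempty_iff] at hM hM'
    obtain ⟨a, hM⟩ := hM
    obtain ⟨a', hM'⟩ := hM'
    rcases M with M | ⟨m1, m2, m3⟩
    · simp at hM
    rcases M' with M' | ⟨m1', m2', m3'⟩
    · simp at hM'
    rcases Q with ⟨x, y, z⟩ | Q
    swap
    · simp at hQM
    have hm : m1 ≠ m1' := fst_ne_of_adj_of_adj hQM hQM' fun h => hMM' (congrArg Sum.inr h)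
    simp only [adj_inl_inr, adj_inr_inl] at hM hM' hQM hQM'
    -- as for `[0,0,s]`, now with the affine condition `m₁ · x(1 - y(x + y + xy)) = y + 1 - s - z`
    have hK : x * (1 - y * (x + y + x * y)) = 0 := by
      refine (mul_eq_zero.1 ?_).resolve_left (sub_ne_zero.2 hm)
      linear_combination hQM.2 - hM.2 + hM.1 - hQM.1 - hQM'.2 + hM'.2 - hM'.1 + hQM'.1
    have hz : z = y + 1 - s := by
      linear_combination hQM.2 - hM.2 + hM.1 - hQM.1 - m1 * hK
    have hy : y ≠ -1 := by
      rintro rfl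
      exact hQL (by simp [hz])
    refine ⟨x, y, by rw [hz], hy, ?_⟩
    rcases mul_eq_zero.1 hK with hx | hK
    · exact .inl hx
    · exact .inr (by linear_combination -hK)
  · rintro ⟨x, y, rfl, hy, hx⟩
    have hxK : x * (y * (x + y + x * y) - 1) = 0 := by
      rcases hx with hx | hx
      · rw [hx, zero_mul]
      · rw [hx, sub_self, mul_zero]
    refine ⟨fun h => hy (by linear_combination (adj_inl_inr.1 h).1),
      .inr (1, x - y, x - y - 1 + s), .inr (-1, -x - y, -x - y - 1 + s), ?_, ?_, ?_, ?_, ?_⟩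
    · simp only [ne_eq, Sum.inr.injEq, Prod.mk.injEq, not_and]
      exact fun h _ _ => h2 (by linear_combination h)
    · exact commonNeighbors_inr_zero_nonempty_iff.2
        ⟨x - y - 1, by simp only [adj_inr_inl]; constructor <;> ring⟩
    · exact commonNeighbors_inr_zero_nonempty_iff.2
        ⟨x + y + 1, by simp only [adj_inr_inl]; constructor <;> ring⟩
    · simp only [adj_inl_inr]
      exact ⟨by ring, by linear_combination -hxK⟩
    · simp only [adj_inl_inr]
      exact ⟨by ring, by linear_combination hxK⟩

theorem isSuccessor_inr_zero_zero_iff (h2 : (2 : F) ≠ 0) {s : F} {W : Vtx F} :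
    (RGraph F).IsSuccessor (.inr (0, 0, s)) W ↔ W = .inr (0, 1, s) := by
  constructor
  · rintro ⟨hW, Q, ⟨hQ, hQW⟩, huniq⟩
    obtain ⟨x, y, rfl, hy, hx⟩ := (isSpecial_inr_zero_zero_iff h2).1 hQ
    rcases W with W | ⟨w1, w2, w3⟩
    · simp at hQW
    simp only [adj_inl_inr] at hQW
    have hw3 : w3 = s := by linear_combination hQW.2 + w1 * y * hx
    have hw1 : w1 = 0 := by
      by_contra hw1
      refine hW (commonNeighbors_inr_zero_nonempty_iff.2 ⟨w2 / w1, ?_⟩)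
      simp only [adj_inr_inl, hw3]
      constructor
      · field_simp
        ring
      · ring
    subst w1 w3
    have hw2 : w2 = -y := by linear_combination hQW.1
    subst w2
    suffices y = -1 by simp [this]
    by_contra hy1
    have h1y : 1 + y ≠ 0 := fun h => hy1 (by linear_combination h)
    -- `(0, y, -s)` and `(-y / (1 + y), y, -s)` are both special neighbours of `[0, -y, s]`
    have hspecial : ∀ x', x' * (x' + y + x' * y) = 0 →
        Sum.inl (x', y, -s) = (Sum.inl (x, y, -s) : Vtx F) := fun x' hx' =>
      huniq _ ⟨(isSpecial_inr_zero_zero_iff h2).2 ⟨x', y, rfl, hy, hx'⟩, by simp⟩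
    have h0 := hspecial 0 (by ring)
    have h1 := hspecial (-y / (1 + y)) (by field_simp; ring)
    simp only [Sum.inl.injEq, Prod.mk.injEq, and_true] at h0 h1
    rw [← h0, div_eq_zero_iff, neg_eq_zero] at h1
    exact h1.elim hy h1y
  · rintro rfl
    refine ⟨fun h => ?_, .inl (0, -1, -s), ⟨(isSpecial_inr_zero_zero_iff h2).2
      ⟨0, -1, rfl, by simp, by ring⟩, by simp⟩, ?_⟩
    · obtain ⟨a, h⟩ := commonNeighbors_inr_zero_nonempty_iff.1 h
      simp at h
    · rintro Q ⟨hQ, hQW⟩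
      obtain ⟨x, y, rfl, -, hx⟩ := (isSpecial_inr_zero_zero_iff h2).1 hQ
      simp only [adj_inl_inr] at hQW
      have hy : y = -1 := by linear_combination hQW.1
      subst hy
      have hx : x = 0 := by linear_combination -hx
      rw [hx]

theorem isSuccessor_inr_zero_one_and_iff (h2 : (2 : F) ≠ 0) {s : F} {W : Vtx F} :
    (RGraph F).IsSuccessor (.inr (0, 1, s)) W ∧
        ¬ (RGraph F).HasWalkOfLengthFour (.inr (0, 0, s)) W ↔
      W = .inr (0, 0, s - 1) := by
  constructor
  · rintro ⟨⟨hW, Q, ⟨hQ, hQW⟩, huniq⟩, hwalk⟩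
    obtain ⟨x, y, rfl, hy, hx⟩ := (isSpecial_inr_zero_one_iff h2).1 hQ
    rcases W with W | ⟨w1, w2, w3⟩
    · simp at hQW
    simp only [adj_inl_inr] at hQW
    have hw1 : w1 = 0 := by
      by_contra hw1
      have hxw : x * w1 * (y * (x + y + x * y) - 1) = 0 := by
        rcases hx with hx | hx
        · rw [hx, zero_mul, zero_mul]
        · rw [hx, sub_self, mul_zero]
      refine hW (commonNeighbors_inr_zero_nonempty_iff.2 ⟨(w2 - 1) / w1, ?_⟩)
      simp only [adj_inr_inl]
      constructor
      · field_simp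
        ring
      · field_simp
        linear_combination w1 * hQW.2 - w1 * hQW.1 + w1 * hxw
    subst w1
    have hw2 : w2 = -y := by linear_combination hQW.1
    have hw3 : w3 = s - 1 - y := by linear_combination hQW.2
    subst w2 w3
    suffices y = 0 by simp [this]
    by_contra hy0
    by_cases hy1 : y = 1
    · subst hy1
      have hinv : (2 : F)⁻¹ * 2 = 1 := inv_mul_cancel₀ h2
      refine hwalk ⟨.inr (2, 0, s), commonNeighbors_inr_zero_nonempty_iff.2 ⟨0, by simp⟩,
        .inl (2⁻¹, 1, 2 - s), (mem_commonNeighbors _).2 ⟨?_, ?_⟩⟩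
      · simp only [adj_inr_inl]
        exact ⟨by linear_combination -hinv, by linear_combination (-2 * (2 : F)⁻¹ - 2) * hinv⟩
      · simp only [adj_inr_inl]
        constructor <;> ring
    -- `(0, y, y + 1 - s)` and `((1 - y) / y, y, y + 1 - s)` are both special neighbours of `W`
    have hspecial : ∀ x', (x' = 0 ∨ y * (x' + y + x' * y) = 1) →
        Sum.inl (x', y, y + 1 - s) = (Sum.inl (x, y, y + 1 - s) : Vtx F) := fun x' hx' =>
      huniq _ ⟨(isSpecial_inr_zero_one_iff h2).2 ⟨x', y, rfl, hy, hx'⟩,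
        by simp only [adj_inl_inr]; constructor <;> ring⟩
    have h0 := hspecial 0 (.inl rfl)
    have h1 := hspecial ((1 - y) / y) (.inr (by field_simp; ring))
    simp only [Sum.inl.injEq, Prod.mk.injEq, and_true] at h0 h1
    rw [← h0, div_eq_zero_iff, sub_eq_zero] at h1
    exact h1.elim (fun h => hy1 h.symm) hy0
  · rintro rfl
    refine ⟨⟨fun h => ?_, .inl (0, 0, 1 - s), ⟨(isSpecial_inr_zero_one_iff h2).2
      ⟨0, 0, by simp, by simp, .inl rfl⟩, by simp⟩, ?_⟩, ?_⟩
    · obtain ⟨a, h⟩ := commonNeighbors_inr_zero_nonempty_iff.1 h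
      simp at h
    · rintro Q ⟨hQ, hQW⟩
      obtain ⟨x, y, rfl, -, hx⟩ := (isSpecial_inr_zero_one_iff h2).1 hQ
      simp only [adj_inl_inr] at hQW
      have hy : y = 0 := by linear_combination hQW.1
      subst hy
      simp only [zero_mul, zero_ne_one, or_false] at hx
      simp [hx]
    · rintro ⟨M, hM, hMW⟩
      rw [commonNeighbors_symm] at hMW
      obtain ⟨a, hM⟩ := commonNeighbors_inr_zero_nonempty_iff.1 hM
      obtain ⟨c, hMW⟩ := commonNeighbors_inr_zero_nonempty_iff.1 hMW
      rcases M with M | ⟨m1, m2, m3⟩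
      · simp at hM
      simp only [adj_inr_inl] at hM hMW
      exact one_ne_zero (by linear_combination hMW.2 - hM.2 : (1 : F) = 0)

theorem iso_apply_inr_zero_zero_sub_one (h2 : (2 : F) ≠ 0) (φ : RGraph F ≃g RGraph F) {s : F}
    (h : φ (.inr (0, 0, s)) = .inr (0, 0, s)) : φ (.inr (0, 0, s - 1)) = .inr (0, 0, s - 1) := by
  have h1 : φ (.inr (0, 1, s)) = .inr (0, 1, s) := by
    rw [← isSuccessor_inr_zero_zero_iff h2, ← h, φ.isSuccessor_iff,
      isSuccessor_inr_zero_zero_iff h2]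
  rw [← isSuccessor_inr_zero_one_and_iff h2, ← h1, ← h, φ.isSuccessor_iff,
    φ.hasWalkOfLengthFour_iff, isSuccessor_inr_zero_one_and_iff h2]

end RGraph

theorem FiniteField.two_ne_zero_of_odd_card {K : Type*} [Field K] [Fintype K]
    (h : Odd (Fintype.card K)) : (2 : K) ≠ 0 :=
  Ring.two_ne_zero fun hK => by
    have := FiniteField.even_card_iff_char_two.1 hK
    have := Nat.odd_iff.1 h
    omega

theorem aut_fixes_shifts_general (q p e : ℕ) (hodd : Odd p)
    (hq : q = p ^ e) (F : Type) [Field F] [Fintype F]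
    (hcard : Fintype.card F = q) (φ : RGraph F ≃g RGraph F) (r : F)
    (h : φ (Sum.inr (0, 0, r)) = Sum.inr (0, 0, r)) :
    ∀ n : ℕ, φ (Sum.inr (0, 0, r - (n : F))) = Sum.inr (0, 0, r - (n : F)) := by
  have h2 : (2 : F) ≠ 0 := FiniteField.two_ne_zero_of_odd_card (hcard ▸ hq ▸ hodd.pow)
  intro n
  induction n with
  | zero => simpa using h
  | succ n ih => simpa [sub_add_eq_sub_sub] using RGraph.iso_apply_inr_zero_zero_sub_one h2 φ ih

/-- Let `q` be a power of an odd prime `p` with `q ≡ 1 (mod 3)`, `F = 𝔽_q`, and `φ` an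
automorphism of `R`. If `φ([0,0,r]) = [0,0,r]` for some `r ∈ F`, then
`φ([0,0,r−k]) = [0,0,r−k]` for every `k` in the prime subfield of `F`, i.e. for every `k`
that is an integer multiple of `1` in `F`. -/
theorem aut_fixes_shifts (q p e : ℕ) (hp : p.Prime) (hodd : Odd p) (he : 1 ≤ e)
    (hq : q = p ^ e) (hmod : q % 3 = 1) (F : Type) [Field F] [Fintype F]
    (hcard : Fintype.card F = q) (φ : RGraph F ≃g RGraph F) (r : F)
    (h : φ (Sum.inr (0, 0, r)) = Sum.inr (0, 0, r)) :
    ∀ n : ℕ, φ (Sum.inr (0, 0, r - (n : F))) = Sum.inr (0, 0, r - (n : F)) :=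
  aut_fixes_shifts_general q p e hodd hq F hcard φ r h
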